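/- arXiv:2210.00483 — 6 statements merged into one kernel-verified Lean document; each statement's English description precedes it below -/
import Mathlib

section
/- For any probability distributions P, Q with densities p, q with respect to a dominating measure, and α ∈ (0,1): α·KL(R‖P) + (1−α)·KL(R‖Q) = (1−α)·R_α(Q‖P) + KL(R ‖ G_α), where G_α is the geometric mixture with density proportional to p^α q^{1−α}, and R_α(Q‖P) := (1/(α−1)) log ∫ p^α q^{1−α} is the α-Rényi divergence. -/
open MeasureTheory Real

/-- Kullback-Leibler divergence between two distributions given by densities `p`, `q`
with respect to a common dominating measure `ν`. -/
noncomputable def KLd {X : Type*} [MeasurableSpace X] (ν : Measure X) (p q : X → ℝ) : ℝ :=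
  ∫ x, p x * Real.log (p x / q x) ∂ν

/-- For probability distributions `P`, `Q` with densities `p`, `q` w.r.t. a dominating
measure `ν`, any probability distribution `R` (density `r`) absolutely continuous w.r.t.
both, and `α ∈ (0,1)`:
`α·KL(R‖P) + (1−α)·KL(R‖Q) = (1−α)·R_α(Q‖P) + KL(R‖G_α)`,
where `G_α` is the geometric mixture with density `p^α q^{1−α} / Z`,
`Z = ∫ p^α q^{1−α} dν > 0`, and `R_α(Q‖P) = (1/(α−1)) log Z` is the α-Rényi divergence. -/
theorem stmt2 {X : Type*} [MeasurableSpace X] (ν : Measure X)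
    (p q r : X → ℝ) (α : ℝ) (hα : α ∈ Set.Ioo (0:ℝ) 1)
    (hpm : Measurable p) (hqm : Measurable q) (hrm : Measurable r)
    (hp0 : ∀ x, 0 ≤ p x) (hq0 : ∀ x, 0 ≤ q x) (hr0 : ∀ x, 0 ≤ r x)
    (hp1 : ∫ x, p x ∂ν = 1) (hq1 : ∫ x, q x ∂ν = 1) (hr1 : ∫ x, r x ∂ν = 1)
    (hacp : ∀ x, p x = 0 → r x = 0) (hacq : ∀ x, q x = 0 → r x = 0)
    (Z : ℝ) (hZ : Z = ∫ x, p x ^ α * q x ^ (1 - α) ∂ν) (hZpos : 0 < Z)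
    (h1 : Integrable (fun x => r x * Real.log (r x / p x)) ν)
    (h2 : Integrable (fun x => r x * Real.log (r x / q x)) ν)
    (h3 : Integrable (fun x => r x * Real.log (r x / (p x ^ α * q x ^ (1 - α) / Z))) ν) :
    α * KLd ν r p + (1 - α) * KLd ν r q
      = (1 - α) * ((1 / (α - 1)) * Real.log Z)
        + KLd ν r (fun x => p x ^ α * q x ^ (1 - α) / Z) := by
  obtain ⟨hα0, hα1⟩ := hα
  have hrint : Integrable r ν := by
    by_contra h
    rw [MeasureTheory.integral_undef h] at hr1
    norm_num at hr1
  have key : ∀ x, α * (r x * Real.log (r x / p x)) + (1 - α) * (r x * Real.log (r x / q x))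
      = r x * Real.log (r x / (p x ^ α * q x ^ (1 - α) / Z)) - Real.log Z * r x := by
    intro x
    rcases eq_or_lt_of_le (hr0 x) with h0 | h0
    · simp [← h0]
    · have hp : 0 < p x := by
        rcases eq_or_lt_of_le (hp0 x) with h | h
        · exact absurd (hacp x h.symm) h0.ne'
        · exact h
      have hq : 0 < q x := by
        rcases eq_or_lt_of_le (hq0 x) with h | h
        · exact absurd (hacq x h.symm) h0.ne'
        · exact h
      have hpa : 0 < p x ^ α := Real.rpow_pos_of_pos hp α
      have hqa : 0 < q x ^ (1 - α) := Real.rpow_pos_of_pos hq (1 - α)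
      rw [Real.log_div h0.ne' hp.ne', Real.log_div h0.ne' hq.ne',
          Real.log_div h0.ne' (by positivity), Real.log_div (by positivity) hZpos.ne',
          Real.log_mul hpa.ne' hqa.ne', Real.log_rpow hp, Real.log_rpow hq]
      ring
  unfold KLd
  rw [← integral_const_mul, ← integral_const_mul,
      ← integral_add (h1.const_mul _) (h2.const_mul _)]
  simp_rw [key]
  rw [integral_sub h3 (hrint.const_mul _), integral_const_mul, hr1]
  have hne : α - 1 ≠ 0 := by linarith
  have : (1 - α) * ((1 / (α - 1)) * Real.log Z) = -Real.log Z := by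
    field_simp
    ring
  rw [this]
  ring
end

section
/- For probability measures P and Q (not mutually singular) and α ∈ (0,1): the infimum over probability measures R of α·KL(R‖P) + (1−α)·KL(R‖Q) equals (1−α)·R_α(Q‖P), attained at the normalized geometric mixture with density proportional to p^α q^{1−α}. -/
/-!
With `g = p^α q^(1-α) / Z` the normalized geometric mixture,
`log (r/g) = α log (r/p) + (1-α) log (r/q) + log Z` wherever `r > 0`, hence
`α KL(r‖p) + (1-α) KL(r‖q) = KL(r‖g) - log Z` for every probability density `r` vanishing
where `p` or `q` does. Gibbs' inequality `KL(r‖g) ≥ 0` gives the lower bound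
`-log Z = (1-α) R_α(Q‖P)`, attained at `r = g`. The one analytic point is that `KL(g‖p)` and
`KL(g‖q)` are finite, which follows from `|p^α q^(1-α) log (q/p)| ≤ q/α + p/(1-α)`.
-/

open MeasureTheory Real

lemma rpow_mul_rpow_mul_log_div_le {a b t : ℝ} (ha : 0 < a) (hab : a ≤ b) (ht : 0 < t) :
    a ^ t * b ^ (1 - t) * log (b / a) ≤ b / t := by
  have hb : 0 < b := ha.trans_le hab
  have hlt := abs_log_mul_self_rpow_lt (a / b) t (div_pos ha hb) ((div_le_one hb).2 hab) ht
  have hlog : log (b / a) = -log (a / b) := by rw [← log_inv, inv_div]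
  calc a ^ t * b ^ (1 - t) * log (b / a) = b * -(log (a / b) * (a / b) ^ t) := by
        rw [div_rpow ha.le hb.le, rpow_sub hb, rpow_one, hlog]
        field_simp
    _ ≤ b * (1 / t) := mul_le_mul_of_nonneg_left ((neg_le_abs _).trans hlt.le) hb.le
    _ = b / t := mul_one_div b t

lemma abs_rpow_mul_rpow_mul_log_div_le {a b α : ℝ} (hα : α ∈ Set.Ioo 0 1)
    (ha : 0 ≤ a) (hb : 0 ≤ b) :
    |a ^ α * b ^ (1 - α) * log (b / a)| ≤ b / α + a / (1 - α) := by
  obtain ⟨hα0, hα1⟩ := hα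
  have hα1' : 0 < 1 - α := sub_pos.2 hα1
  rcases ha.eq_or_lt with rfl | ha
  · simp [zero_rpow hα0.ne']; positivity
  rcases hb.eq_or_lt with rfl | hb
  · simp [zero_rpow hα1'.ne']; positivity
  rcases le_total a b with hab | hba
  · have hle := rpow_mul_rpow_mul_log_div_le ha hab hα0
    have hlog : 0 ≤ log (b / a) := log_nonneg ((one_le_div ha).2 hab)
    rw [abs_of_nonneg (by positivity)]
    linarith [div_pos ha hα1']
  · have hle := rpow_mul_rpow_mul_log_div_le hb hba hα1'
    rw [sub_sub_cancel] at hle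
    have hlog : log (b / a) = -log (a / b) := by rw [← log_inv, inv_div]
    have hlog' : 0 ≤ log (a / b) := log_nonneg ((one_le_div hb).2 hba)
    have hw : 0 ≤ a ^ α * b ^ (1 - α) * log (a / b) := by positivity
    rw [hlog, mul_neg, abs_neg, abs_of_nonneg hw]
    linarith [div_pos hb hα0]

lemma sub_le_mul_log_div {r s : ℝ} (hr : 0 ≤ r) (hs : 0 ≤ s) (hsr : s = 0 → r = 0) :
    r - s ≤ r * log (r / s) := by
  rcases hr.eq_or_lt with rfl | hr
  · simpa using hs
  have hs : 0 < s := hs.lt_of_ne fun h => hr.ne' (hsr h.symm)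
  calc r - s = r * (1 - (r / s)⁻¹) := by field_simp
    _ ≤ r * log (r / s) :=
      mul_le_mul_of_nonneg_left (one_sub_inv_le_log_of_pos (div_pos hr hs)) hr.le

lemma mul_log_div_rpow_mul_rpow_div {a b c α Z : ℝ} (hZ : Z ≠ 0) (ha : 0 ≤ a) (hb : 0 ≤ b)
    (hc : 0 ≤ c) (hac : a = 0 → c = 0) (hbc : b = 0 → c = 0) :
    c * log (c / (a ^ α * b ^ (1 - α) / Z))
      = α * (c * log (c / a)) + (1 - α) * (c * log (c / b)) + c * log Z := by
  rcases hc.eq_or_lt with rfl | hc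
  · simp
  have ha : 0 < a := ha.lt_of_ne fun h => hc.ne' (hac h.symm)
  have hb : 0 < b := hb.lt_of_ne fun h => hc.ne' (hbc h.symm)
  rw [log_div hc.ne' (by positivity), log_div (by positivity) hZ,
    log_mul (by positivity) (by positivity), log_rpow ha, log_rpow hb,
    log_div hc.ne' ha.ne', log_div hc.ne' hb.ne']
  ring

lemma rpow_mul_rpow_div_mul_log_div_left {a b α Z : ℝ} (hα : α ∈ Set.Ioo 0 1) (hZ : Z ≠ 0)
    (ha : 0 ≤ a) (hb : 0 ≤ b) :
    a ^ α * b ^ (1 - α) / Z * log (a ^ α * b ^ (1 - α) / Z / a)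
      = (1 - α) / Z * (a ^ α * b ^ (1 - α) * log (b / a)) - log Z * (a ^ α * b ^ (1 - α) / Z) := by
  rcases ha.eq_or_lt with rfl | ha
  · simp [zero_rpow hα.1.ne']
  rcases hb.eq_or_lt with rfl | hb
  · simp [zero_rpow (sub_pos.2 hα.2).ne']
  rw [log_div (by positivity) ha.ne', log_div (by positivity) hZ,
    log_mul (by positivity) (by positivity), log_rpow ha, log_rpow hb, log_div hb.ne' ha.ne']
  ring

section GeometricMixture

variable {X : Type*}

noncomputable def geomMix (p q : X → ℝ) (α Z : ℝ) : X → ℝ :=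
  fun x => p x ^ α * q x ^ (1 - α) / Z

lemma geomMix_swap (p q : X → ℝ) (α Z : ℝ) : geomMix q p (1 - α) Z = geomMix p q α Z := by
  ext x
  simp only [geomMix, sub_sub_cancel, mul_comm]

lemma geomMix_nonneg {p q : X → ℝ} {α Z : ℝ} (hp0 : ∀ x, 0 ≤ p x) (hq0 : ∀ x, 0 ≤ q x)
    (hZ : 0 ≤ Z) (x : X) : 0 ≤ geomMix p q α Z x := by
  have := hp0 x; have := hq0 x
  unfold geomMix; positivity

lemma geomMix_eq_zero_of_left {p q : X → ℝ} {α Z : ℝ} (hα : α ≠ 0) {x : X} (hx : p x = 0) :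
    geomMix p q α Z x = 0 := by
  simp [geomMix, hx, zero_rpow hα]

lemma geomMix_eq_zero_of_right {p q : X → ℝ} {α Z : ℝ} (hα : α ≠ 1) {x : X} (hx : q x = 0) :
    geomMix p q α Z x = 0 := by
  simp [geomMix, hx, zero_rpow (sub_ne_zero.2 hα.symm)]

lemma eq_zero_or_eq_zero_of_geomMix_eq_zero {p q : X → ℝ} {α Z : ℝ} (hα : α ∈ Set.Ioo 0 1)
    (hZ : Z ≠ 0) {x : X} (hp : 0 ≤ p x) (hq : 0 ≤ q x) (hx : geomMix p q α Z x = 0) :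
    p x = 0 ∨ q x = 0 := by
  simpa [geomMix, hZ, rpow_eq_zero hp hα.1.ne', rpow_eq_zero hq (sub_pos.2 hα.2).ne'] using hx

variable [MeasurableSpace X] {ν : Measure X}

lemma integrable_rpow_mul_rpow_mul_log_div {p q : X → ℝ} {α : ℝ} (hα : α ∈ Set.Ioo 0 1)
    (hpm : Measurable p) (hqm : Measurable q) (hp0 : ∀ x, 0 ≤ p x) (hq0 : ∀ x, 0 ≤ q x)
    (hp : Integrable p ν) (hq : Integrable q ν) :
    Integrable (fun x => p x ^ α * q x ^ (1 - α) * log (q x / p x)) ν :=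
  ((hq.div_const α).add (hp.div_const (1 - α))).mono' (by fun_prop)
    (ae_of_all _ fun x => abs_rpow_mul_rpow_mul_log_div_le hα (hp0 x) (hq0 x))

lemma integrable_geomMix_mul_log_div_left {p q : X → ℝ} {α Z : ℝ} (hα : α ∈ Set.Ioo 0 1)
    (hZ : Z ≠ 0) (hpm : Measurable p) (hqm : Measurable q) (hp0 : ∀ x, 0 ≤ p x)
    (hq0 : ∀ x, 0 ≤ q x) (hp : Integrable p ν) (hq : Integrable q ν)
    (hw : Integrable (fun x => p x ^ α * q x ^ (1 - α)) ν) :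
    Integrable (fun x => geomMix p q α Z x * log (geomMix p q α Z x / p x)) ν := by
  simp only [geomMix, fun x => rpow_mul_rpow_div_mul_log_div_left hα hZ (hp0 x) (hq0 x)]
  exact ((integrable_rpow_mul_rpow_mul_log_div hα hpm hqm hp0 hq0 hp hq).const_mul _).sub
    ((hw.div_const Z).const_mul _)

lemma integrable_geomMix_mul_log_div_right {p q : X → ℝ} {α Z : ℝ} (hα : α ∈ Set.Ioo 0 1)
    (hZ : Z ≠ 0) (hpm : Measurable p) (hqm : Measurable q) (hp0 : ∀ x, 0 ≤ p x)
    (hq0 : ∀ x, 0 ≤ q x) (hp : Integrable p ν) (hq : Integrable q ν)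
    (hw : Integrable (fun x => p x ^ α * q x ^ (1 - α)) ν) :
    Integrable (fun x => geomMix p q α Z x * log (geomMix p q α Z x / q x)) ν := by
  have hα' : 1 - α ∈ Set.Ioo 0 1 := ⟨sub_pos.2 hα.2, sub_lt_self 1 hα.1⟩
  have hw' : Integrable (fun x => q x ^ (1 - α) * p x ^ (1 - (1 - α))) ν := by
    simpa only [sub_sub_cancel, mul_comm] using hw
  simpa only [geomMix_swap] using
    integrable_geomMix_mul_log_div_left hα' hZ hqm hpm hq0 hp0 hq hp hw'

lemma KLd_nonneg {r s : X → ℝ} (hr0 : ∀ x, 0 ≤ r x) (hs0 : ∀ x, 0 ≤ s x)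
    (hsr : ∀ x, s x = 0 → r x = 0) (hr : Integrable r ν) (hs : Integrable s ν)
    (hrs : ∫ x, s x ∂ν ≤ ∫ x, r x ∂ν) : 0 ≤ KLd ν r s := by
  by_cases hint : Integrable (fun x => r x * log (r x / s x)) ν
  · calc 0 ≤ ∫ x, (r x - s x) ∂ν := by rw [integral_sub hr hs]; linarith
      _ ≤ KLd ν r s :=
        integral_mono (hr.sub hs) hint fun x => sub_le_mul_log_div (hr0 x) (hs0 x) (hsr x)
  · -- off the integrable case `KLd` is the junk value `0`
    simp [KLd, integral_undef hint]

@[simp]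
lemma KLd_self (r : X → ℝ) : KLd ν r r = 0 := by
  simp [KLd]

lemma KLd_geomMix {p q r : X → ℝ} {α Z : ℝ} (hZ : Z ≠ 0) (hp0 : ∀ x, 0 ≤ p x)
    (hq0 : ∀ x, 0 ≤ q x) (hr0 : ∀ x, 0 ≤ r x) (hrp : ∀ x, p x = 0 → r x = 0)
    (hrq : ∀ x, q x = 0 → r x = 0) (hr : Integrable r ν)
    (hrp_int : Integrable (fun x => r x * log (r x / p x)) ν)
    (hrq_int : Integrable (fun x => r x * log (r x / q x)) ν) :
    KLd ν r (geomMix p q α Z) = α * KLd ν r p + (1 - α) * KLd ν r q + (∫ x, r x ∂ν) * log Z := by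
  calc KLd ν r (geomMix p q α Z)
      = ∫ x, (α * (r x * log (r x / p x)) + (1 - α) * (r x * log (r x / q x))
          + r x * log Z) ∂ν :=
        integral_congr_ae (ae_of_all _ fun x =>
          mul_log_div_rpow_mul_rpow_div hZ (hp0 x) (hq0 x) (hr0 x) (hrp x) (hrq x))
    _ = _ := by
      rw [integral_add (by exact (hrp_int.const_mul α).add (hrq_int.const_mul _))
          (hr.mul_const _), integral_add (hrp_int.const_mul α) (hrq_int.const_mul _),
        integral_const_mul, integral_const_mul, integral_mul_const]
      rfl

end GeometricMixture

/-- For probability measures `P`, `Q` (densities `p`, `q` w.r.t. `ν`, not mutually singular,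
i.e. `Z = ∫ p^α q^{1−α} dν > 0`) and `α ∈ (0,1)`: the infimum over probability measures `R`
of `α·KL(R‖P) + (1−α)·KL(R‖Q)` equals `(1−α)·R_α(Q‖P)`, where
`R_α(Q‖P) = (1/(α−1)) log Z`, attained at the normalized geometric mixture with density
`p^α q^{1−α} / Z`. -/
theorem stmt3 {X : Type*} [MeasurableSpace X] (ν : Measure X)
    (p q : X → ℝ) (α : ℝ) (hα : α ∈ Set.Ioo (0:ℝ) 1)
    (hpm : Measurable p) (hqm : Measurable q)
    (hp0 : ∀ x, 0 ≤ p x) (hq0 : ∀ x, 0 ≤ q x)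
    (hp1 : ∫ x, p x ∂ν = 1) (hq1 : ∫ x, q x ∂ν = 1)
    (Z : ℝ) (hZ : Z = ∫ x, p x ^ α * q x ^ (1 - α) ∂ν) (hZpos : 0 < Z) :
    (∀ r : X → ℝ, Measurable r → (∀ x, 0 ≤ r x) → (∫ x, r x ∂ν) = 1 →
        (∀ x, p x = 0 → r x = 0) → (∀ x, q x = 0 → r x = 0) →
        Integrable (fun x => r x * Real.log (r x / p x)) ν →
        Integrable (fun x => r x * Real.log (r x / q x)) ν →
        (1 - α) * ((1 / (α - 1)) * Real.log Z)
          ≤ α * KLd ν r p + (1 - α) * KLd ν r q)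
    ∧ α * KLd ν (fun x => p x ^ α * q x ^ (1 - α) / Z) p
        + (1 - α) * KLd ν (fun x => p x ^ α * q x ^ (1 - α) / Z) q
      = (1 - α) * ((1 / (α - 1)) * Real.log Z) := by
  have hrhs : (1 - α) * ((1 / (α - 1)) * log Z) = -log Z := by
    field_simp [(sub_neg.2 hα.2).ne]
    ring
  have hp : Integrable p ν := .of_integral_ne_zero (hp1 ▸ one_ne_zero)
  have hq : Integrable q ν := .of_integral_ne_zero (hq1 ▸ one_ne_zero)
  have hw : Integrable (fun x => p x ^ α * q x ^ (1 - α)) ν :=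
    .of_integral_ne_zero (hZ ▸ hZpos.ne')
  have hg0 := geomMix_nonneg (α := α) hp0 hq0 hZpos.le
  have hg1 : ∫ x, geomMix p q α Z x ∂ν = 1 := by
    simp only [geomMix]
    rw [integral_div, ← hZ, div_self hZpos.ne']
  rw [hrhs]
  refine ⟨fun r _ hr0 hr1 hrp hrq hrp_int hrq_int => ?_, ?_⟩
  · have hr : Integrable r ν := .of_integral_ne_zero (hr1 ▸ one_ne_zero)
    have hgibbs : 0 ≤ KLd ν r (geomMix p q α Z) :=
      KLd_nonneg hr0 hg0 (fun x hx => (eq_zero_or_eq_zero_of_geomMix_eq_zero hα hZpos.ne'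
        (hp0 x) (hq0 x) hx).elim (hrp x) (hrq x)) hr (hw.div_const Z) (by rw [hr1, hg1])
    have hsplit := KLd_geomMix (α := α) hZpos.ne' hp0 hq0 hr0 hrp hrq hr hrp_int hrq_int
    rw [hr1] at hsplit
    linarith
  · have hsplit := KLd_geomMix (α := α) (r := geomMix p q α Z) hZpos.ne' hp0 hq0 hg0
      (fun _ => geomMix_eq_zero_of_left hα.1.ne') (fun _ => geomMix_eq_zero_of_right hα.2.ne)
      (hw.div_const Z)
      (integrable_geomMix_mul_log_div_left hα hZpos.ne' hpm hqm hp0 hq0 hp hq hw)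
      (integrable_geomMix_mul_log_div_right hα hZpos.ne' hpm hqm hp0 hq0 hp hq hw)
    rw [KLd_self, hg1] at hsplit
    change α * KLd ν (geomMix p q α Z) p + (1 - α) * KLd ν (geomMix p q α Z) q = _
    linarith
end

section
/- The function α ↦ h(α)/(α(1−α)), where h is the binary entropy function, attains its minimum on (0,1) at α = 1/2, with minimum value 4 log 2. -/
/-!
With `f x = -log (1 - x) / x = ∑ xⁿ / (n + 1)`, one has
`h(α) / (α (1 - α)) = f α + f (1 - α) = ∑ (αⁿ + (1 - α)ⁿ) / (n + 1)`.
By convexity of `xⁿ` each numerator is at least `2 (1/2)ⁿ`, so the sum is at least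
`2 f (1/2) = 4 log 2`.
-/

open Real Set

lemma two_mul_add_div_two_pow_le {a b : ℝ} (ha : 0 ≤ a) (hb : 0 ≤ b) (n : ℕ) :
    2 * ((a + b) / 2) ^ n ≤ a ^ n + b ^ n := by
  have h := (convexOn_pow n).2 (mem_Ici.2 ha) (mem_Ici.2 hb)
    (by norm_num : (0 : ℝ) ≤ 1 / 2) (by norm_num : (0 : ℝ) ≤ 1 / 2) (by norm_num)
  simp only [smul_eq_mul] at h
  rw [show (a + b) / 2 = 1 / 2 * a + 1 / 2 * b by ring]
  linarith

lemma hasSum_pow_div_neg_log_one_sub_div {x : ℝ} (hx : x ≠ 0) (h : |x| < 1) :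
    HasSum (fun n : ℕ => x ^ n / (n + 1)) (-log (1 - x) / x) := by
  have hterm : (fun n : ℕ => x ^ (n + 1) / (n + 1) / x) = fun n : ℕ => x ^ n / (n + 1) := by
    funext n
    rw [pow_succ, div_right_comm, mul_div_cancel_right₀ _ hx]
  simpa only [hterm] using (hasSum_pow_div_log_of_abs_lt_one h).div_const x

lemma entropy_div_mul_one_sub_eq {α : ℝ} (hα₀ : α ≠ 0) (hα₁ : 1 - α ≠ 0) :
    (-(α * log α) - (1 - α) * log (1 - α)) / (α * (1 - α))
      = -log (1 - α) / α + -log (1 - (1 - α)) / (1 - α) := by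
  rw [sub_sub_cancel]
  field_simp
  ring

lemma four_mul_log_two_le_neg_log_one_sub_div_add {α : ℝ} (hα : α ∈ Ioo (0 : ℝ) 1) :
    4 * log 2 ≤ -log (1 - α) / α + -log (1 - (1 - α)) / (1 - α) := by
  obtain ⟨hα₀, hα₁⟩ := hα
  have abs_lt_one {x : ℝ} (h₀ : 0 < x) (h₁ : x < 1) : |x| < 1 := by
    rw [abs_of_pos h₀]; exact h₁
  have hhalf := hasSum_pow_div_neg_log_one_sub_div (x := 1 / 2) (by norm_num)
    (abs_lt_one (by norm_num) (by norm_num))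
  have hsum := (hasSum_pow_div_neg_log_one_sub_div hα₀.ne' (abs_lt_one hα₀ hα₁)).add
    (hasSum_pow_div_neg_log_one_sub_div (sub_pos.2 hα₁).ne'
      (abs_lt_one (sub_pos.2 hα₁) (by linarith)))
  have hvalue : 2 * (-log (1 - 1 / 2) / (1 / 2)) = 4 * log 2 := by
    rw [show (1 : ℝ) - 1 / 2 = 2⁻¹ by norm_num, log_inv]
    ring
  rw [← hvalue]
  refine hasSum_le (fun n => ?_) (hhalf.mul_left 2) hsum
  rw [← add_div, mul_div_assoc']
  gcongr
  simpa using two_mul_add_div_two_pow_le hα₀.le (sub_pos.2 hα₁).le n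

/-- The function `α ↦ h(α)/(α(1−α))`, where `h(α) = −α log α − (1−α) log(1−α)` is the
binary entropy function, attains its minimum on `(0,1)` at `α = 1/2`, with minimum value
`4 log 2`. -/
theorem stmt7 :
    (∀ α ∈ Set.Ioo (0:ℝ) 1,
        4 * Real.log 2
          ≤ (-(α * Real.log α) - (1 - α) * Real.log (1 - α)) / (α * (1 - α)))
    ∧ (-((1/2 : ℝ) * Real.log (1/2)) - (1 - 1/2) * Real.log (1 - 1/2))
        / ((1/2) * (1 - 1/2)) = 4 * Real.log 2 := by
  refine ⟨fun α hα => ?_, ?_⟩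
  · rw [entropy_div_mul_one_sub_eq hα.1.ne' (sub_pos.2 hα.2).ne']
    exact four_mul_log_two_le_neg_log_one_sub_div_add hα
  · rw [show (1 : ℝ) - 1 / 2 = 2⁻¹ by norm_num, one_div, log_inv]
    ring
end

section
/- Let P, Q be probability measures on X and f measurable such that f is σ-sub-Gaussian under the mixture M = αP + (1−α)Q for some α ∈ (0,1). Then |E_P[f] − E_Q[f]| ≤ √(2σ² · JS_α(Q‖P) / (α(1−α))). -/
open MeasureTheory Real

/-- `f` is `σ`-sub-Gaussian under the distribution with density `p` w.r.t. `ν`: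
`log E[e^{λ(f − E f)}] ≤ λ²σ²/2` for all `λ ∈ ℝ` (including finiteness of the
exponential moments). -/
def SubGaussian {X : Type*} [MeasurableSpace X] (ν : Measure X) (p : X → ℝ) (f : X → ℝ)
    (σ : ℝ) : Prop :=
  (∀ l : ℝ,
    Integrable (fun x => Real.exp (l * (f x - ∫ y, f y * p y ∂ν)) * p x) ν) ∧
  ∀ l : ℝ,
    Real.log (∫ x, Real.exp (l * (f x - ∫ y, f y * p y ∂ν)) * p x ∂ν)
      ≤ l ^ 2 * σ ^ 2 / 2

/-- Donsker–Varadhan style inequality with densities: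
`∫ p g ≤ KL(p‖m) + log ∫ e^g m`. -/
lemma donsker_aux {X : Type*} [MeasurableSpace X] (ν : Measure X) (p m g : X → ℝ)
    (hp0 : ∀ x, 0 ≤ p x) (hm0 : ∀ x, 0 ≤ m x)
    (hpos : ∀ x, 0 < p x → 0 < m x)
    (hpi : Integrable p ν) (_hp1 : ∫ x, p x ∂ν = 1)
    (hmi : Integrable m ν) (hm1 : ∫ x, m x ∂ν = 1)
    (hpg : Integrable (fun x => p x * g x) ν)
    (hgm : Integrable (fun x => g x * m x) ν) (hgm0 : ∫ x, g x * m x ∂ν = 0)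
    (hegm : Integrable (fun x => Real.exp (g x) * m x) ν)
    (hkl : Integrable (fun x => p x * Real.log (p x / m x)) ν) :
    ∫ x, p x * g x ∂ν
      ≤ (∫ x, p x * Real.log (p x / m x) ∂ν) + Real.log (∫ x, Real.exp (g x) * m x ∂ν) := by
  set c : ℝ := ∫ x, Real.exp (g x) * m x ∂ν with hc
  have hc1 : (1 : ℝ) ≤ c := by
    have hpt : ∀ x, m x + g x * m x ≤ Real.exp (g x) * m x := by
      intro x
      have h1 : g x + 1 ≤ Real.exp (g x) := Real.add_one_le_exp (g x)
      nlinarith [hm0 x]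
    have hint : Integrable (fun x => m x + g x * m x) ν := hmi.add hgm
    have := integral_mono hint hegm hpt
    rwa [integral_add hmi hgm, hm1, hgm0, add_zero] at this
  have hc0 : (0 : ℝ) < c := lt_of_lt_of_le one_pos hc1
  have hpt : ∀ x, p x * g x
      ≤ p x * Real.log (p x / m x)
        + (Real.exp (g x) * m x / c - p x + p x * Real.log c) := by
    intro x
    rcases eq_or_lt_of_le (hp0 x) with h | h
    · have hpx : p x = 0 := h.symm
      have : (0:ℝ) ≤ Real.exp (g x) * m x / c :=
        div_nonneg (mul_nonneg (Real.exp_pos _).le (hm0 x)) hc0.le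
      simp [hpx]
      linarith
    · have hmx : 0 < m x := hpos x h
      have ht : 0 < Real.exp (g x) * m x / p x := by positivity
      have hlog1 : Real.log ((Real.exp (g x) * m x / p x) / c)
          ≤ (Real.exp (g x) * m x / p x) / c - 1 :=
        Real.log_le_sub_one_of_pos (div_pos ht hc0)
      have hlog2 : Real.log ((Real.exp (g x) * m x / p x) / c)
          = Real.log (Real.exp (g x) * m x / p x) - Real.log c :=
        Real.log_div ht.ne' hc0.ne'
      have hexpand : Real.log (Real.exp (g x) * m x / p x)
          = g x - Real.log (p x / m x) := by
        rw [Real.log_div (by positivity) h.ne', Real.log_mul (Real.exp_pos _).ne' hmx.ne',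
          Real.log_exp, Real.log_div h.ne' hmx.ne']
        ring
      have hkey : g x - Real.log (p x / m x)
          ≤ Real.log c + (Real.exp (g x) * m x / p x) / c - 1 := by
        rw [← hexpand]; linarith
      have heq : p x * ((Real.exp (g x) * m x / p x) / c) = Real.exp (g x) * m x / c := by
        field_simp
      have hmul := mul_le_mul_of_nonneg_left hkey h.le
      have h3 : p x * g x ≤ p x * Real.log (p x / m x)
          + (p x * ((Real.exp (g x) * m x / p x) / c) - p x + p x * Real.log c) := by
        nlinarith [hmul]
      rw [heq] at h3
      exact h3
  have hrint : Integrable (fun x => p x * Real.log (p x / m x)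
      + (Real.exp (g x) * m x / c - p x + p x * Real.log c)) ν :=
    hkl.add (((hegm.div_const c).sub hpi).add (hpi.mul_const (Real.log c)))
  have hmono := integral_mono hpg hrint hpt
  have i1 : Integrable (fun x => Real.exp (g x) * m x / c - p x) ν := (hegm.div_const c).sub hpi
  have i2 : Integrable (fun x => p x * Real.log c) ν := hpi.mul_const (Real.log c)
  have iB : Integrable (fun x => Real.exp (g x) * m x / c - p x + p x * Real.log c) ν := i1.add i2
  have hBint : ∫ x, (Real.exp (g x) * m x / c - p x + p x * Real.log c) ∂ν
      = Real.log c := by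
    rw [integral_add i1 i2]
    have e1 : ∫ x, (Real.exp (g x) * m x / c - p x) ∂ν = c / c - 1 := by
      rw [integral_sub (hegm.div_const c) hpi, integral_div, ← hc, _hp1]
    have e2 : ∫ x, p x * Real.log c ∂ν = Real.log c := by
      rw [integral_mul_const, _hp1, one_mul]
    rw [e1, e2, div_self hc0.ne']
    ring
  have hr : ∫ x, (p x * Real.log (p x / m x)
      + (Real.exp (g x) * m x / c - p x + p x * Real.log c)) ∂ν
      = (∫ x, p x * Real.log (p x / m x) ∂ν) + Real.log c := by
    rw [integral_add hkl iB, hBint]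
  rw [hr] at hmono
  exact hmono

/-- From `∀ l, l * a ≤ K + l² σ² / 2` deduce `a² ≤ 2 σ² K`. -/
lemma quad_aux (a K σ : ℝ) (hσ : 0 ≤ σ)
    (h : ∀ l : ℝ, l * a ≤ K + l ^ 2 * σ ^ 2 / 2) : a ^ 2 ≤ 2 * σ ^ 2 * K := by
  have hK : 0 ≤ K := by have := h 0; simpa using this
  rcases eq_or_lt_of_le hσ with hs | hs
  · have hσ0 : σ = 0 := hs.symm
    have ha : a = 0 := by
      by_contra ha
      have h1 := h ((K + 1) / a)
      rw [hσ0] at h1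
      have : (K + 1) / a * a = K + 1 := div_mul_cancel₀ _ ha
      rw [this] at h1
      norm_num at h1
    simp [ha, hσ0]
  · have hσ2 : 0 < σ ^ 2 := by positivity
    have h1 := h (a / σ ^ 2)
    have : a / σ ^ 2 * a = a ^ 2 / σ ^ 2 := by ring
    rw [this] at h1
    have h2 : (a / σ ^ 2) ^ 2 * σ ^ 2 / 2 = a ^ 2 / σ ^ 2 / 2 := by
      field_simp
    rw [h2] at h1
    have h3 : a ^ 2 / σ ^ 2 * σ ^ 2 = a ^ 2 := div_mul_cancel₀ _ hσ2.ne'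
    have h4 : a ^ 2 / σ ^ 2 / 2 * σ ^ 2 = a ^ 2 / 2 := by
      field_simp
    have h5 : a ^ 2 ≤ K * σ ^ 2 + a ^ 2 / 2 := by
      have h6 := mul_le_mul_of_nonneg_right h1 hσ2.le
      rw [add_mul, h3, h4] at h6
      exact h6
    nlinarith [h5]

/-- If `f` is `σ`-sub-Gaussian under the mixture `M = αP + (1−α)Q` for some `α ∈ (0,1)`,
then `|E_P[f] − E_Q[f]| ≤ √(2σ²·JS_α(Q‖P)/(α(1−α)))`, where
`JS_α(Q‖P) = α·KL(P‖M) + (1−α)·KL(Q‖M)`. -/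
theorem stmt10 {X : Type*} [MeasurableSpace X] (ν : Measure X)
    (p q : X → ℝ) (α : ℝ) (hα : α ∈ Set.Ioo (0:ℝ) 1)
    (hpm : Measurable p) (hqm : Measurable q)
    (hp0 : ∀ x, 0 ≤ p x) (hq0 : ∀ x, 0 ≤ q x)
    (hp1 : ∫ x, p x ∂ν = 1) (hq1 : ∫ x, q x ∂ν = 1)
    (f : X → ℝ) (hfm : Measurable f) (σ : ℝ) (hσ : 0 ≤ σ)
    (hfp : Integrable (fun x => f x * p x) ν)
    (hfq : Integrable (fun x => f x * q x) ν)
    (hsubM : SubGaussian ν (fun x => α * p x + (1 - α) * q x) f σ)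
    (h1 : Integrable (fun x => p x * Real.log (p x / (α * p x + (1 - α) * q x))) ν)
    (h2 : Integrable (fun x => q x * Real.log (q x / (α * p x + (1 - α) * q x))) ν) :
    |(∫ x, f x * p x ∂ν) - ∫ x, f x * q x ∂ν|
      ≤ Real.sqrt (2 * σ ^ 2 *
          (α * KLd ν p (fun x => α * p x + (1 - α) * q x)
            + (1 - α) * KLd ν q (fun x => α * p x + (1 - α) * q x)) / (α * (1 - α))) := by
  obtain ⟨hα0, hα1⟩ := hα
  have hα1' : 0 < 1 - α := by linarith
  set m : X → ℝ := fun x => α * p x + (1 - α) * q x with hm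
  -- integrability of the densities
  have hpi : Integrable p ν := by
    by_contra h; rw [integral_undef h] at hp1; norm_num at hp1
  have hqi : Integrable q ν := by
    by_contra h; rw [integral_undef h] at hq1; norm_num at hq1
  have hmi : Integrable m ν := (hpi.const_mul α).add (hqi.const_mul (1 - α))
  have hm1 : ∫ x, m x ∂ν = 1 := by
    rw [hm]
    rw [integral_add (hpi.const_mul α) (hqi.const_mul (1 - α)),
      integral_const_mul, integral_const_mul, hp1, hq1]
    ring
  have hm0 : ∀ x, 0 ≤ m x := fun x => by
    have := hp0 x; have := hq0 x; simp only [hm]; nlinarith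
  -- mean of f under m
  have hfmint : Integrable (fun x => f x * m x) ν := by
    have : (fun x => f x * m x) = fun x => α * (f x * p x) + (1 - α) * (f x * q x) := by
      ext x; simp only [hm]; ring
    rw [this]; exact (hfp.const_mul α).add (hfq.const_mul (1 - α))
  set μM : ℝ := ∫ y, f y * m y ∂ν with hμM
  have hμMeq : μM = α * (∫ x, f x * p x ∂ν) + (1 - α) * (∫ x, f x * q x ∂ν) := by
    rw [hμM]
    have : (fun y => f y * m y) = fun y => α * (f y * p y) + (1 - α) * (f y * q y) := by
      ext y; simp only [hm]; ring
    rw [this, integral_add (hfp.const_mul α) (hfq.const_mul (1 - α)),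
      integral_const_mul, integral_const_mul]
  -- the key Donsker–Varadhan bound, applied for each l, to p and to q
  have key : ∀ (r : X → ℝ), (∀ x, 0 ≤ r x) → Integrable r ν → (∫ x, r x ∂ν) = 1 →
      (∀ x, 0 < r x → 0 < m x) →
      Integrable (fun x => f x * r x) ν →
      Integrable (fun x => r x * Real.log (r x / m x)) ν →
      ∀ l : ℝ, l * ((∫ x, f x * r x ∂ν) - μM)
        ≤ (∫ x, r x * Real.log (r x / m x) ∂ν) + l ^ 2 * σ ^ 2 / 2 := by
    intro r hr0 hri hr1 hrpos hfr hklr l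
    have hpg : Integrable (fun x => r x * (l * (f x - μM))) ν := by
      have : (fun x => r x * (l * (f x - μM)))
          = fun x => l * (f x * r x) - (l * μM) * r x := by ext x; ring
      rw [this]; exact (hfr.const_mul l).sub (hri.const_mul (l * μM))
    have hgm : Integrable (fun x => (l * (f x - μM)) * m x) ν := by
      have : (fun x => (l * (f x - μM)) * m x)
          = fun x => l * (f x * m x) - (l * μM) * m x := by ext x; ring
      rw [this]; exact (hfmint.const_mul l).sub (hmi.const_mul (l * μM))
    have hgm0 : ∫ x, (l * (f x - μM)) * m x ∂ν = 0 := by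
      have he : (fun x => (l * (f x - μM)) * m x)
          = fun x => l * (f x * m x) - (l * μM) * m x := by ext x; ring
      rw [he, integral_sub (hfmint.const_mul l) (hmi.const_mul (l * μM)),
        integral_const_mul, integral_const_mul, hm1, ← hμM]
      ring
    have hegm : Integrable (fun x => Real.exp ((l * (f x - μM))) * m x) ν := hsubM.1 l
    have hdv := donsker_aux ν r m (fun x => l * (f x - μM)) hr0 hm0 hrpos hri hr1 hmi hm1
      hpg hgm hgm0 hegm hklr
    have hlog : Real.log (∫ x, Real.exp ((l * (f x - μM))) * m x ∂ν) ≤ l ^ 2 * σ ^ 2 / 2 :=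
      hsubM.2 l
    have hlhs : ∫ x, r x * (l * (f x - μM)) ∂ν = l * ((∫ x, f x * r x ∂ν) - μM) := by
      have he : (fun x => r x * (l * (f x - μM)))
          = fun x => l * (f x * r x) - (l * μM) * r x := by ext x; ring
      rw [he, integral_sub (hfr.const_mul l) (hri.const_mul (l * μM)),
        integral_const_mul, integral_const_mul, hr1]
      ring
    rw [hlhs] at hdv
    linarith
  have hppos : ∀ x, 0 < p x → 0 < m x := by
    intro x hx; have := hq0 x; simp only [hm]; nlinarith
  have hqpos : ∀ x, 0 < q x → 0 < m x := by
    intro x hx; have := hp0 x; simp only [hm]; nlinarith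
  have hA := key p hp0 hpi hp1 hppos hfp h1
  have hB := key q hq0 hqi hq1 hqpos hfq h2
  set KP : ℝ := ∫ x, p x * Real.log (p x / m x) ∂ν with hKP
  set KQ : ℝ := ∫ x, q x * Real.log (q x / m x) ∂ν with hKQ
  set Δ : ℝ := (∫ x, f x * p x ∂ν) - ∫ x, f x * q x ∂ν with hΔ
  have haP : (∫ x, f x * p x ∂ν) - μM = (1 - α) * Δ := by rw [hμMeq, hΔ]; ring
  have haQ : (∫ x, f x * q x ∂ν) - μM = -(α * Δ) := by rw [hμMeq, hΔ]; ring
  have hsqP : ((1 - α) * Δ) ^ 2 ≤ 2 * σ ^ 2 * KP := by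
    apply quad_aux _ _ _ hσ
    intro l; have := hA l; rw [haP] at this; exact this
  have hsqQ : (α * Δ) ^ 2 ≤ 2 * σ ^ 2 * KQ := by
    apply quad_aux _ _ _ hσ
    intro l; have := hB (-l); rw [haQ] at this
    have he : -l * -(α * Δ) = l * (α * Δ) := by ring
    rw [he] at this
    have he2 : (-l) ^ 2 = l ^ 2 := by ring
    rw [he2] at this; exact this
  have hKLP : KLd ν p (fun x => α * p x + (1 - α) * q x) = KP := rfl
  have hKLQ : KLd ν q (fun x => α * p x + (1 - α) * q x) = KQ := rfl
  rw [hKLP, hKLQ]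
  apply Real.abs_le_sqrt
  rw [le_div_iff₀ (by positivity)]
  nlinarith [hsqP, hsqQ, mul_le_mul_of_nonneg_left hsqP hα0.le,
    mul_le_mul_of_nonneg_left hsqQ hα1'.le]
end

section
/- Let μ and ν be probability measures and f a measurable function that is σ-sub-Gaussian (under all relevant distributions). Then for α ∈ (0,1) the mismatch term satisfies |E_ν[f] − E_μ[f]| ≤ √(2σ²·JS_α(ν‖μ)/(α(1−α))), and combining with the matched generalization bound: |gen(P_{W|S}, μ, ν)| ≤ √(2σ²·JS_α(ν‖μ)/(α(1−α))) + (1/n)Σᵢ √(2σ²·I_JS^α(W;Zᵢ)/(α(1−α))). -/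
open MeasureTheory Real

/-!
Everything rests on the Donsker–Varadhan inequality `E_q[g] ≤ KL(q‖p) + log E_p[e^g]`.
Taking `g = λ (f - E_p f)`, sub-Gaussianity of `f` under `p` bounds the log-moment generating
function by `λ²σ²/2`, and optimising over `λ` gives `(E_q f - E_p f)² ≤ 2σ² KL(q‖p)`.
For the mixture `p = α q₁ + (1 - α) q₂` one has `E_{q₁} f - E_p f = (1 - α) (E_{q₁} f - E_{q₂} f)`
and `E_{q₂} f - E_p f = α (E_{q₂} f - E_{q₁} f)`; adding the two bounds with weights `α`, `1 - α`
yields `α (1 - α) (E_{q₂} f - E_{q₁} f)² ≤ 2σ² JS_α`.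

On `𝒵`, applied to `ℓ(w, ·)` for each `w` and averaged over `P_W`, this bounds the mismatch
term; on `𝒲 × 𝒵`, applied to `P_W ⊗ μ` and `P_{W,Zᵢ}`, it is the matched bound for each `i`.
The triangle inequality combines the two.
-/

lemma eq_zero_and_eq_zero_of_mix_eq_zero {a b α : ℝ} (ha : 0 ≤ a) (hb : 0 ≤ b) (hα₀ : 0 < α)
    (hα₁ : α < 1) (h : α * a + (1 - α) * b = 0) : a = 0 ∧ b = 0 := by
  constructor <;> nlinarith [mul_nonneg hα₀.le ha, mul_nonneg (sub_nonneg.2 hα₁.le) hb]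

lemma mul_sub_mul_log_le_exp_mul_div_sub {g p q Z : ℝ} (hp : 0 ≤ p) (hq : 0 ≤ q)
    (hqp : p = 0 → q = 0) (hZ : 0 < Z) :
    g * q - q * log Z - q * log (q / p) ≤ exp g * p / Z - q := by
  rcases hq.eq_or_lt with rfl | hq
  · simpa using div_nonneg (mul_nonneg (exp_pos g).le hp) hZ.le
  have hp : 0 < p := hp.lt_of_ne fun h => hq.ne' (hqp h.symm)
  set t := g - log Z - log (q / p)
  have hexp : q * exp t = exp g * p / Z := by
    rw [exp_sub, exp_sub, exp_log hZ, exp_log (div_pos hq hp)]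
    field_simp
  calc g * q - q * log Z - q * log (q / p) = q * t := by ring
    _ ≤ q * (exp t - 1) := mul_le_mul_of_nonneg_left (by linarith [add_one_le_exp t]) hq.le
    _ = exp g * p / Z - q := by rw [mul_sub, hexp, mul_one]

lemma sq_le_of_forall_mul_le_add_sq {c K s : ℝ} (hs : 0 ≤ s)
    (h : ∀ l : ℝ, l * c ≤ K + l ^ 2 * s / 2) : c ^ 2 ≤ 2 * s * K := by
  rcases hs.eq_or_lt with rfl | hs
  · obtain rfl : c = 0 := by
      by_contra hc
      have := h ((K + 1) / c)
      rw [div_mul_cancel₀ _ hc] at this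
      linarith
    simp
  · have := h (c / s)
    field_simp at this
    nlinarith

lemma abs_mean_le_add_mean {n : ℕ} {a S : Fin n → ℝ} {R : ℝ} (hR : 0 ≤ R)
    (h : ∀ i, |a i| ≤ R + S i) :
    |1 / (n : ℝ) * ∑ i, a i| ≤ R + 1 / (n : ℝ) * ∑ i, S i := by
  rcases n.eq_zero_or_pos with rfl | hn
  · simpa using hR
  have hn : (0 : ℝ) < n := Nat.cast_pos.2 hn
  calc |1 / (n : ℝ) * ∑ i, a i| ≤ 1 / (n : ℝ) * ∑ i, (R + S i) := by
        rw [abs_mul, abs_of_pos (by positivity)]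
        exact mul_le_mul_of_nonneg_left
          ((Finset.abs_sum_le_sum_abs _ _).trans (Finset.sum_le_sum fun i _ => h i))
          (by positivity)
    _ = R + 1 / (n : ℝ) * ∑ i, S i := by
        rw [Finset.sum_add_distrib, Finset.sum_const, Finset.card_univ, Fintype.card_fin,
          nsmul_eq_mul]
        field_simp

section Densities

variable {X : Type*} [MeasurableSpace X] {ν : Measure X}

structure IsProbDensity (ν : Measure X) (p : X → ℝ) : Prop where
  nonneg : ∀ x, 0 ≤ p x
  integral_eq_one : ∫ x, p x ∂ν = 1

def mixture (α : ℝ) (p q : X → ℝ) : X → ℝ := fun x => α * p x + (1 - α) * q x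

/-- The paper's `JS_α(Q‖P)`, with reference mixture `α P + (1 - α) Q`, is `jsDiv ν α P Q`. -/
noncomputable def jsDiv (ν : Measure X) (α : ℝ) (p q : X → ℝ) : ℝ :=
  α * KLd ν p (mixture α p q) + (1 - α) * KLd ν q (mixture α p q)

lemma IsProbDensity.integrable {p : X → ℝ} (hp : IsProbDensity ν p) : Integrable p ν :=
  Integrable.of_integral_ne_zero (by rw [hp.integral_eq_one]; exact one_ne_zero)

lemma IsProbDensity.mul_prod [SFinite ν] {Y : Type*} [MeasurableSpace Y] {νY : Measure Y}
    [SFinite νY] {p : X → ℝ} {q : Y → ℝ} (hp : IsProbDensity ν p) (hq : IsProbDensity νY q) :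
    IsProbDensity (ν.prod νY) (fun x => p x.1 * q x.2) where
  nonneg x := mul_nonneg (hp.nonneg x.1) (hq.nonneg x.2)
  integral_eq_one := by rw [integral_prod_mul, hp.integral_eq_one, hq.integral_eq_one, one_mul]

lemma isProbDensity_mixture {p q : X → ℝ} {α : ℝ} (hp : IsProbDensity ν p)
    (hq : IsProbDensity ν q) (hα₀ : 0 ≤ α) (hα₁ : α ≤ 1) :
    IsProbDensity ν (mixture α p q) where
  nonneg x :=
    add_nonneg (mul_nonneg hα₀ (hp.nonneg x)) (mul_nonneg (sub_nonneg.2 hα₁) (hq.nonneg x))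
  integral_eq_one := by
    simp only [mixture]
    rw [integral_add (hp.integrable.const_mul α) (hq.integrable.const_mul (1 - α)),
      integral_const_mul, integral_const_mul, hp.integral_eq_one, hq.integral_eq_one]
    ring

lemma integral_mul_mixture {f p q : X → ℝ} (α : ℝ) (hp : Integrable (fun x => f x * p x) ν)
    (hq : Integrable (fun x => f x * q x) ν) :
    ∫ x, f x * mixture α p q x ∂ν = α * ∫ x, f x * p x ∂ν + (1 - α) * ∫ x, f x * q x ∂ν := by
  have : (fun x => f x * mixture α p q x) = fun x => α * (f x * p x) + (1 - α) * (f x * q x) :=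
    funext fun x => by rw [mixture]; ring
  rw [this, integral_add (hp.const_mul α) (hq.const_mul (1 - α)), integral_const_mul,
    integral_const_mul]

lemma MeasureTheory.Integrable.mul_left_of_mul_mixture {f p q : X → ℝ} {α : ℝ} (hα : α ≠ 0)
    (hmix : Integrable (fun x => f x * mixture α p q x) ν)
    (hq : Integrable (fun x => f x * q x) ν) : Integrable (fun x => f x * p x) ν := by
  refine ((hmix.sub (hq.const_mul (1 - α))).const_mul α⁻¹).congr (ae_of_all _ fun x => ?_)
  show α⁻¹ * (f x * (α * p x + (1 - α) * q x) - (1 - α) * (f x * q x)) = f x * p x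
  field_simp
  ring

lemma IsProbDensity.integral_exp_mul_pos {p : X → ℝ} (hp : IsProbDensity ν p) (g : X → ℝ)
    (hgp : Integrable (fun x => exp (g x) * p x) ν) : 0 < ∫ x, exp (g x) * p x ∂ν := by
  have hsupp : Function.support (fun x => exp (g x) * p x) = Function.support p := by
    ext x
    simp [(exp_pos (g x)).ne']
  have hpos : 0 < ∫ x, p x ∂ν := hp.integral_eq_one ▸ one_pos
  rw [integral_pos_iff_support_of_nonneg hp.nonneg hp.integrable] at hpos
  rw [integral_pos_iff_support_of_nonneg (fun x => mul_nonneg (exp_pos _).le (hp.nonneg x)) hgp,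
    hsupp]
  exact hpos

lemma integral_mul_le_KLd_add_log_integral_exp_mul {p q g : X → ℝ} (hp : IsProbDensity ν p)
    (hq : IsProbDensity ν q) (hqp : ∀ x, p x = 0 → q x = 0)
    (hgq : Integrable (fun x => g x * q x) ν) (hgp : Integrable (fun x => exp (g x) * p x) ν)
    (hKL : Integrable (fun x => q x * log (q x / p x)) ν) :
    ∫ x, g x * q x ∂ν ≤ KLd ν q p + log (∫ x, exp (g x) * p x ∂ν) := by
  set Z := ∫ x, exp (g x) * p x ∂ν
  have hZ : 0 < Z := hp.integral_exp_mul_pos g hgp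
  have hgqZ : Integrable (fun x => g x * q x - q x * log Z) ν :=
    hgq.sub (hq.integrable.mul_const _)
  have hpZ : Integrable (fun x => exp (g x) * p x / Z - q x) ν :=
    (hgp.div_const Z).sub hq.integrable
  have hmono : ∫ x, (g x * q x - q x * log Z - q x * log (q x / p x)) ∂ν
      ≤ ∫ x, (exp (g x) * p x / Z - q x) ∂ν := integral_mono (hgqZ.sub hKL) hpZ
    fun x => mul_sub_mul_log_le_exp_mul_div_sub (hp.nonneg x) (hq.nonneg x) (hqp x) hZ
  rw [integral_sub hgqZ hKL, integral_sub hgq (hq.integrable.mul_const _),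
    integral_sub (hgp.div_const Z) hq.integrable, integral_mul_const, integral_div,
    hq.integral_eq_one, div_self hZ.ne'] at hmono
  rw [KLd]
  linarith

lemma SubGaussian.mul_integral_sub_le {p q f : X → ℝ} {σ : ℝ} (hf : SubGaussian ν p f σ)
    (hp : IsProbDensity ν p) (hq : IsProbDensity ν q) (hqp : ∀ x, p x = 0 → q x = 0)
    (hfq : Integrable (fun x => f x * q x) ν)
    (hKL : Integrable (fun x => q x * log (q x / p x)) ν) (l : ℝ) :
    l * (∫ x, f x * q x ∂ν - ∫ x, f x * p x ∂ν) ≤ KLd ν q p + l ^ 2 * σ ^ 2 / 2 := by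
  set m := ∫ x, f x * p x ∂ν
  have hsplit : (fun x => l * (f x - m) * q x) = fun x => l * (f x * q x) - l * m * q x :=
    funext fun x => by ring
  have hgq : Integrable (fun x => l * (f x - m) * q x) ν := by
    rw [hsplit]
    exact (hfq.const_mul l).sub (hq.integrable.const_mul (l * m))
  have hDV := integral_mul_le_KLd_add_log_integral_exp_mul hp hq hqp hgq (hf.1 l) hKL
  rw [hsplit, integral_sub (hfq.const_mul l) (hq.integrable.const_mul _), integral_const_mul,
    integral_const_mul, hq.integral_eq_one] at hDV
  linarith [hf.2 l]

lemma SubGaussian.abs_sub_le_sqrt_jsDiv {q₁ q₂ f : X → ℝ} {σ α : ℝ}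
    (hf : SubGaussian ν (mixture α q₁ q₂) f σ) (hα₀ : 0 < α) (hα₁ : α < 1)
    (hq₁ : IsProbDensity ν q₁) (hq₂ : IsProbDensity ν q₂)
    (hf₁ : Integrable (fun x => f x * q₁ x) ν) (hf₂ : Integrable (fun x => f x * q₂ x) ν)
    (hKL₁ : Integrable (fun x => q₁ x * log (q₁ x / mixture α q₁ q₂ x)) ν)
    (hKL₂ : Integrable (fun x => q₂ x * log (q₂ x / mixture α q₁ q₂ x)) ν) :
    |∫ x, f x * q₂ x ∂ν - ∫ x, f x * q₁ x ∂ν|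
      ≤ √(2 * σ ^ 2 * jsDiv ν α q₁ q₂ / (α * (1 - α))) := by
  have hp := isProbDensity_mixture hq₁ hq₂ hα₀.le hα₁.le
  have hvanish x (h : mixture α q₁ q₂ x = 0) :=
    eq_zero_and_eq_zero_of_mix_eq_zero (hq₁.nonneg x) (hq₂.nonneg x) hα₀ hα₁ h
  have hmean := integral_mul_mixture α hf₁ hf₂
  set E₁ := ∫ x, f x * q₁ x ∂ν
  set E₂ := ∫ x, f x * q₂ x ∂ν
  have h₁ : ((1 - α) * (E₁ - E₂)) ^ 2 ≤ 2 * σ ^ 2 * KLd ν q₁ (mixture α q₁ q₂) :=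
    sq_le_of_forall_mul_le_add_sq (sq_nonneg σ) fun l => by
      have := hf.mul_integral_sub_le hp hq₁ (fun x hx => (hvanish x hx).1) hf₁ hKL₁ l
      rw [hmean] at this
      linarith
  have h₂ : (α * (E₂ - E₁)) ^ 2 ≤ 2 * σ ^ 2 * KLd ν q₂ (mixture α q₁ q₂) :=
    sq_le_of_forall_mul_le_add_sq (sq_nonneg σ) fun l => by
      have := hf.mul_integral_sub_le hp hq₂ (fun x hx => (hvanish x hx).2) hf₂ hKL₂ l
      rw [hmean] at this
      linarith
  refine abs_le_sqrt ?_
  rw [le_div_iff₀ (mul_pos hα₀ (sub_pos.2 hα₁)), jsDiv]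
  nlinarith [mul_le_mul_of_nonneg_left h₁ hα₀.le, mul_le_mul_of_nonneg_left h₂ (sub_pos.2 hα₁).le]

lemma SubGaussian.integrable_mul {p f : X → ℝ} {σ : ℝ} (hf : SubGaussian ν p f σ)
    (hp : Integrable p ν) (hp₀ : ∀ x, 0 ≤ p x) (hfm : AEStronglyMeasurable f ν)
    (hpm : AEStronglyMeasurable p ν) : Integrable (fun x => f x * p x) ν := by
  set m := ∫ x, f x * p x ∂ν
  have hcentred : Integrable (fun x => (f x - m) * p x) ν := by
    refine ((hf.1 1).add (hf.1 (-1))).mono ((hfm.sub aestronglyMeasurable_const).mul hpm)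
      (ae_of_all _ fun x => ?_)
    have habs : |f x - m| ≤ exp (f x - m) + exp (-(f x - m)) :=
      (le_of_lt (by linarith [add_one_le_exp |f x - m|])).trans (exp_abs_le _)
    show ‖(f x - m) * p x‖ ≤ ‖exp (1 * (f x - m)) * p x + exp (-1 * (f x - m)) * p x‖
    rw [one_mul, neg_one_mul, ← add_mul, Real.norm_eq_abs, Real.norm_eq_abs, abs_mul, abs_mul,
      abs_of_nonneg (hp₀ x), abs_of_pos (add_pos (exp_pos _) (exp_pos _))]
    exact mul_le_mul_of_nonneg_right habs (hp₀ x)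
  exact (hcentred.add (hp.const_mul m)).congr
    (ae_of_all _ fun x => show (f x - m) * p x + m * p x = f x * p x by ring)

end Densities

lemma abs_integral_mul_prod_sub_le {W Z : Type*} [MeasurableSpace W] [MeasurableSpace Z]
    {νW : Measure W} {νZ : Measure Z} [SFinite νW] [SFinite νZ] {pW : W → ℝ} {q₁ q₂ : Z → ℝ}
    {ℓ : W → Z → ℝ} {R : ℝ} (hW : IsProbDensity νW pW)
    (h₁ : Integrable (fun x => ℓ x.1 x.2 * (pW x.1 * q₁ x.2)) (νW.prod νZ))
    (h₂ : Integrable (fun x => ℓ x.1 x.2 * (pW x.1 * q₂ x.2)) (νW.prod νZ))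
    (hR : ∀ w, |∫ z, ℓ w z * q₂ z ∂νZ - ∫ z, ℓ w z * q₁ z ∂νZ| ≤ R) :
    |∫ x, ℓ x.1 x.2 * (pW x.1 * q₂ x.2) ∂(νW.prod νZ)
        - ∫ x, ℓ x.1 x.2 * (pW x.1 * q₁ x.2) ∂(νW.prod νZ)| ≤ R := by
  have hfactor (w : W) (q : Z → ℝ) :
      ∫ z, ℓ w z * (pW w * q z) ∂νZ = pW w * ∫ z, ℓ w z * q z ∂νZ := by
    rw [← integral_const_mul]
    exact integral_congr_ae (ae_of_all _ fun z => by ring)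
  have h₂₁ : Integrable (fun x => ℓ x.1 x.2 * (pW x.1 * q₂ x.2) - ℓ x.1 x.2 * (pW x.1 * q₁ x.2))
      (νW.prod νZ) := h₂.sub h₁
  rw [← integral_sub h₂ h₁, integral_prod _ h₂₁, ← Real.norm_eq_abs]
  calc _ ≤ ∫ w, pW w * R ∂νW := by
        refine norm_integral_le_of_norm_le (hW.integrable.mul_const R) ?_
        filter_upwards [h₁.prod_right_ae, h₂.prod_right_ae] with w hw₁ hw₂
        rw [integral_sub hw₂ hw₁, hfactor, hfactor, ← mul_sub, Real.norm_eq_abs, abs_mul,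
          abs_of_nonneg (hW.nonneg w)]
        exact mul_le_mul_of_nonneg_left (hR w) (hW.nonneg w)
    _ = R := by rw [integral_mul_const, hW.integral_eq_one, one_mul]

theorem stmt13_general {𝒲 𝒵 : Type*} [MeasurableSpace 𝒲] [MeasurableSpace 𝒵]
    (νW : Measure 𝒲) (νZ : Measure 𝒵) [SigmaFinite νW] [SigmaFinite νZ]
    (n : ℕ) (α : ℝ) (hα : α ∈ Set.Ioo (0:ℝ) 1)
    (σ : ℝ)
    (j : Fin n → 𝒲 × 𝒵 → ℝ)
    (hjm : ∀ i, Measurable (j i)) (hj0 : ∀ i x, 0 ≤ j i x)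
    (hj1 : ∀ i, ∫ x, j i x ∂(νW.prod νZ) = 1)
    (pW : 𝒲 → ℝ) (μd νd : 𝒵 → ℝ)
    (hpWm : Measurable pW) (hpW0 : ∀ w, 0 ≤ pW w) (hpW1 : ∫ w, pW w ∂νW = 1)
    (hμm : Measurable μd) (hμ0 : ∀ z, 0 ≤ μd z) (hμ1 : ∫ z, μd z ∂νZ = 1)
    (hν0 : ∀ z, 0 ≤ νd z) (hν1 : ∫ z, νd z ∂νZ = 1)
    (ℓ : 𝒲 → 𝒵 → ℝ) (hlm : Measurable fun x : 𝒲 × 𝒵 => ℓ x.1 x.2)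
    -- σ-sub-Gaussianity of the loss under the test/train mixture, for every w
    (hsubMix : ∀ w, SubGaussian νZ (fun z => α * μd z + (1 - α) * νd z) (ℓ w) σ)
    -- σ-sub-Gaussianity of the loss under the mixtures P_{W,Zᵢ}^{(α)}
    (hsubJ : ∀ i, SubGaussian (νW.prod νZ)
        (fun x => α * (pW x.1 * μd x.2) + (1 - α) * j i x)
        (fun x => ℓ x.1 x.2) σ)
    -- integrability of the loss and of all the KL integrands involved
    (hintμ : ∀ w, Integrable (fun z => ℓ w z * μd z) νZ)
    (hintν : ∀ w, Integrable (fun z => ℓ w z * νd z) νZ)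
    (hintprd : Integrable (fun x => ℓ x.1 x.2 * (pW x.1 * νd x.2)) (νW.prod νZ))
    (hintj : ∀ i, Integrable (fun x => ℓ x.1 x.2 * j i x) (νW.prod νZ))
    (hKL1 : Integrable
      (fun z => μd z * Real.log (μd z / (α * μd z + (1 - α) * νd z))) νZ)
    (hKL2 : Integrable
      (fun z => νd z * Real.log (νd z / (α * μd z + (1 - α) * νd z))) νZ)
    (hKL3 : ∀ i, Integrable (fun x => (pW x.1 * μd x.2) *
      Real.log ((pW x.1 * μd x.2) / (α * (pW x.1 * μd x.2) + (1 - α) * j i x)))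
      (νW.prod νZ))
    (hKL4 : ∀ i, Integrable (fun x => j i x *
      Real.log (j i x / (α * (pW x.1 * μd x.2) + (1 - α) * j i x)))
      (νW.prod νZ)) :
    -- the mismatch term bound, for any σ-sub-Gaussian f
    (∀ f : 𝒵 → ℝ, Measurable f →
        Integrable (fun z => f z * μd z) νZ →
        Integrable (fun z => f z * νd z) νZ →
        SubGaussian νZ (fun z => α * μd z + (1 - α) * νd z) f σ →
        |(∫ z, f z * νd z ∂νZ) - ∫ z, f z * μd z ∂νZ|
          ≤ Real.sqrt (2 * σ ^ 2 *
              (α * KLd νZ μd (fun z => α * μd z + (1 - α) * νd z)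
                + (1 - α) * KLd νZ νd (fun z => α * μd z + (1 - α) * νd z))
              / (α * (1 - α))))
    ∧ -- the mismatched generalization error bound
      |(1 / (n : ℝ)) * ∑ i : Fin n,
          ((∫ x, ℓ x.1 x.2 * (pW x.1 * νd x.2) ∂(νW.prod νZ))
            - ∫ x, ℓ x.1 x.2 * j i x ∂(νW.prod νZ))|
        ≤ Real.sqrt (2 * σ ^ 2 *
              (α * KLd νZ μd (fun z => α * μd z + (1 - α) * νd z)
                + (1 - α) * KLd νZ νd (fun z => α * μd z + (1 - α) * νd z))
              / (α * (1 - α)))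
          + (1 / (n : ℝ)) * ∑ i : Fin n, Real.sqrt (2 * σ ^ 2 *
              (α * KLd (νW.prod νZ) (fun x => pW x.1 * μd x.2)
                  (fun x => α * (pW x.1 * μd x.2) + (1 - α) * j i x)
                + (1 - α) * KLd (νW.prod νZ) (j i)
                  (fun x => α * (pW x.1 * μd x.2) + (1 - α) * j i x))
              / (α * (1 - α))) := by
  obtain ⟨hα₀, hα₁⟩ := hα
  have hμ : IsProbDensity νZ μd := ⟨hμ0, hμ1⟩
  have hW : IsProbDensity νW pW := ⟨hpW0, hpW1⟩
  have hWμ : IsProbDensity (νW.prod νZ) (fun x => pW x.1 * μd x.2) := hW.mul_prod hμ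
  refine ⟨fun f _ hfμ hfν hf => hf.abs_sub_le_sqrt_jsDiv hα₀ hα₁ hμ ⟨hν0, hν1⟩ hfμ hfν hKL1 hKL2,
    abs_mean_le_add_mean (sqrt_nonneg _) fun i => ?_⟩
  have hj : IsProbDensity (νW.prod νZ) (j i) := ⟨hj0 i, hj1 i⟩
  have hmix := isProbDensity_mixture hWμ hj hα₀.le hα₁.le
  have hmixm : Measurable fun x : 𝒲 × 𝒵 => α * (pW x.1 * μd x.2) + (1 - α) * j i x := by
    have := hjm i
    fun_prop
  have hintWμ : Integrable (fun x => ℓ x.1 x.2 * (pW x.1 * μd x.2)) (νW.prod νZ) :=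
    ((hsubJ i).integrable_mul hmix.integrable hmix.nonneg hlm.aestronglyMeasurable
      hmixm.aestronglyMeasurable).mul_left_of_mul_mixture hα₀.ne' (hintj i)
  calc _ ≤ _ := abs_sub_le _ (∫ x, ℓ x.1 x.2 * (pW x.1 * μd x.2) ∂(νW.prod νZ)) _
    _ ≤ _ := add_le_add
      (abs_integral_mul_prod_sub_le hW hintWμ hintprd fun w =>
        (hsubMix w).abs_sub_le_sqrt_jsDiv hα₀ hα₁ hμ ⟨hν0, hν1⟩ (hintμ w) (hintν w) hKL1 hKL2)
      (by
        rw [abs_sub_comm]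
        exact (hsubJ i).abs_sub_le_sqrt_jsDiv hα₀ hα₁ hWμ hj hintWμ (hintj i) (hKL3 i) (hKL4 i))

/-- Training distribution `μ` (density `μd`), test distribution `ν` (density `νd`), loss
`ℓ` σ-sub-Gaussian under all relevant distributions, `α ∈ (0,1)`. Then the mismatch term
satisfies `|E_ν[f] − E_μ[f]| ≤ √(2σ²·JS_α(ν‖μ)/(α(1−α)))`, and the mismatched expected
generalization error `gen(P_{W|S},μ,ν) = (1/n)Σᵢ (E_{P_W⊗ν}[ℓ(W,Zᵢ)] − E_{P_{W,Zᵢ}}[ℓ])`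
satisfies
`|gen| ≤ √(2σ²·JS_α(ν‖μ)/(α(1−α))) + (1/n)Σᵢ √(2σ²·I_JS^α(W;Zᵢ)/(α(1−α)))`. -/
theorem stmt13 {𝒲 𝒵 : Type*} [MeasurableSpace 𝒲] [MeasurableSpace 𝒵]
    (νW : Measure 𝒲) (νZ : Measure 𝒵) [SigmaFinite νW] [SigmaFinite νZ]
    (n : ℕ) (hn : 0 < n) (α : ℝ) (hα : α ∈ Set.Ioo (0:ℝ) 1)
    (σ : ℝ) (hσ : 0 ≤ σ)
    (j : Fin n → 𝒲 × 𝒵 → ℝ)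
    (hjm : ∀ i, Measurable (j i)) (hj0 : ∀ i x, 0 ≤ j i x)
    (hj1 : ∀ i, ∫ x, j i x ∂(νW.prod νZ) = 1)
    (pW : 𝒲 → ℝ) (μd νd : 𝒵 → ℝ)
    (hpWm : Measurable pW) (hpW0 : ∀ w, 0 ≤ pW w) (hpW1 : ∫ w, pW w ∂νW = 1)
    (hμm : Measurable μd) (hμ0 : ∀ z, 0 ≤ μd z) (hμ1 : ∫ z, μd z ∂νZ = 1)
    (hνm : Measurable νd) (hν0 : ∀ z, 0 ≤ νd z) (hν1 : ∫ z, νd z ∂νZ = 1)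
    (hmargW : ∀ i, ∀ᵐ w ∂νW, ∫ z, j i (w, z) ∂νZ = pW w)
    (hmargZ : ∀ i, ∀ᵐ z ∂νZ, ∫ w, j i (w, z) ∂νW = μd z)
    (ℓ : 𝒲 → 𝒵 → ℝ) (hlm : Measurable fun x : 𝒲 × 𝒵 => ℓ x.1 x.2)
    -- σ-sub-Gaussianity of the loss under the test/train mixture, for every w
    (hsubMix : ∀ w, SubGaussian νZ (fun z => α * μd z + (1 - α) * νd z) (ℓ w) σ)
    -- σ-sub-Gaussianity of the loss under the mixtures P_{W,Zᵢ}^{(α)}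
    (hsubJ : ∀ i, SubGaussian (νW.prod νZ)
        (fun x => α * (pW x.1 * μd x.2) + (1 - α) * j i x)
        (fun x => ℓ x.1 x.2) σ)
    -- integrability of the loss and of all the KL integrands involved
    (hintμ : ∀ w, Integrable (fun z => ℓ w z * μd z) νZ)
    (hintν : ∀ w, Integrable (fun z => ℓ w z * νd z) νZ)
    (hintprd : Integrable (fun x => ℓ x.1 x.2 * (pW x.1 * νd x.2)) (νW.prod νZ))
    (hintj : ∀ i, Integrable (fun x => ℓ x.1 x.2 * j i x) (νW.prod νZ))
    (hKL1 : Integrable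
      (fun z => μd z * Real.log (μd z / (α * μd z + (1 - α) * νd z))) νZ)
    (hKL2 : Integrable
      (fun z => νd z * Real.log (νd z / (α * μd z + (1 - α) * νd z))) νZ)
    (hKL3 : ∀ i, Integrable (fun x => (pW x.1 * μd x.2) *
      Real.log ((pW x.1 * μd x.2) / (α * (pW x.1 * μd x.2) + (1 - α) * j i x)))
      (νW.prod νZ))
    (hKL4 : ∀ i, Integrable (fun x => j i x *
      Real.log (j i x / (α * (pW x.1 * μd x.2) + (1 - α) * j i x)))
      (νW.prod νZ)) :
    -- the mismatch term bound, for any σ-sub-Gaussian f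
    (∀ f : 𝒵 → ℝ, Measurable f →
        Integrable (fun z => f z * μd z) νZ →
        Integrable (fun z => f z * νd z) νZ →
        SubGaussian νZ (fun z => α * μd z + (1 - α) * νd z) f σ →
        |(∫ z, f z * νd z ∂νZ) - ∫ z, f z * μd z ∂νZ|
          ≤ Real.sqrt (2 * σ ^ 2 *
              (α * KLd νZ μd (fun z => α * μd z + (1 - α) * νd z)
                + (1 - α) * KLd νZ νd (fun z => α * μd z + (1 - α) * νd z))
              / (α * (1 - α))))
    ∧ -- the mismatched generalization error bound
      |(1 / (n : ℝ)) * ∑ i : Fin n,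
          ((∫ x, ℓ x.1 x.2 * (pW x.1 * νd x.2) ∂(νW.prod νZ))
            - ∫ x, ℓ x.1 x.2 * j i x ∂(νW.prod νZ))|
        ≤ Real.sqrt (2 * σ ^ 2 *
              (α * KLd νZ μd (fun z => α * μd z + (1 - α) * νd z)
                + (1 - α) * KLd νZ νd (fun z => α * μd z + (1 - α) * νd z))
              / (α * (1 - α)))
          + (1 / (n : ℝ)) * ∑ i : Fin n, Real.sqrt (2 * σ ^ 2 *
              (α * KLd (νW.prod νZ) (fun x => pW x.1 * μd x.2)
                  (fun x => α * (pW x.1 * μd x.2) + (1 - α) * j i x)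
                + (1 - α) * KLd (νW.prod νZ) (j i)
                  (fun x => α * (pW x.1 * μd x.2) + (1 - α) * j i x))
              / (α * (1 - α))) :=
  stmt13_general νW νZ n α hα σ j hjm hj0 hj1 pW μd νd hpWm hpW0 hpW1 hμm hμ0 hμ1 hν0 hν1 ℓ hlm
    hsubMix hsubJ hintμ hintν hintprd hintj hKL1 hKL2 hKL3 hKL4
end

section
/- Donsker–Varadhan consequence for shifted expectations: if f is measurable and log E_Q[e^{λ(f − E_Q f)}] ≤ ψ(λ) for all λ ∈ [0,b) with ψ convex and ψ(0) = ψ′(0) = 0, then E_P[f] − E_Q[f] ≤ ψ*^{-1}(KL(P‖Q)) = inf_{λ∈(0,b)} (KL(P‖Q) + ψ(λ))/λ for any probability measure P absolutely continuous with respect to Q. -/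
open MeasureTheory Real

lemma fenchel_xy (x y : ℝ) (hx : 0 ≤ x) : x * y ≤ x * Real.log x - x + Real.exp y := by
  rcases hx.eq_or_lt with h | h
  · rw [← h]; simpa using (Real.exp_pos y).le
  · have ht : 0 < Real.exp y / x := by positivity
    have hlog := Real.log_le_sub_one_of_pos ht
    rw [Real.log_div (Real.exp_ne_zero y) (ne_of_gt h), Real.log_exp] at hlog
    have := mul_le_mul_of_nonneg_left hlog h.le
    have hq : x * (Real.exp y / x) = Real.exp y := by field_simp
    nlinarith

/-- Donsker–Varadhan consequence for shifted expectations: if `f` is measurable and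
`log E_Q[e^{λ(f − E_Q f)}] ≤ ψ(λ)` for all `λ ∈ [0,b)` with `ψ` convex and
`ψ(0) = ψ′(0) = 0`, then `E_P[f] − E_Q[f] ≤ ψ*^{-1}(KL(P‖Q))
= inf_{λ∈(0,b)} (KL(P‖Q) + ψ(λ))/λ` for any probability measure `P ≪ Q`.
Here `P`, `Q` have densities `p`, `q` w.r.t. `ν`. -/
theorem stmt17 {X : Type*} [MeasurableSpace X] (ν : Measure X)
    (p q : X → ℝ)
    (hpm : Measurable p) (hqm : Measurable q)
    (hp0 : ∀ x, 0 ≤ p x) (hq0 : ∀ x, 0 ≤ q x)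
    (hp1 : ∫ x, p x ∂ν = 1) (hq1 : ∫ x, q x ∂ν = 1)
    (hac : ∀ x, q x = 0 → p x = 0)
    (f : X → ℝ) (hfm : Measurable f)
    (hfp : Integrable (fun x => f x * p x) ν)
    (hfq : Integrable (fun x => f x * q x) ν)
    (b : EReal) (hb : 0 < b) (ψ : ℝ → ℝ)
    (hconv : ConvexOn ℝ {l : ℝ | 0 ≤ l ∧ (l : EReal) < b} ψ) (hψ0 : ψ 0 = 0)
    (hψ'0 : HasDerivWithinAt ψ 0 {l : ℝ | 0 ≤ l ∧ (l : EReal) < b} 0)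
    (hexp : ∀ l : ℝ, 0 ≤ l → (l : EReal) < b →
      Integrable (fun x => Real.exp (l * (f x - ∫ y, f y * q y ∂ν)) * q x) ν)
    (hcgf : ∀ l : ℝ, 0 ≤ l → (l : EReal) < b →
      Real.log (∫ x, Real.exp (l * (f x - ∫ y, f y * q y ∂ν)) * q x ∂ν) ≤ ψ l)
    (hKL : Integrable (fun x => p x * Real.log (p x / q x)) ν) :
    (∫ x, f x * p x ∂ν) - ∫ x, f x * q x ∂ν
      ≤ sInf ((fun l => (KLd ν p q + ψ l) / l) ''
          {l : ℝ | 0 < l ∧ (l : EReal) < b}) := by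
  have hpint : Integrable p ν := by
    by_contra hcon
    rw [integral_undef hcon] at hp1; norm_num at hp1
  have hqint : Integrable q ν := by
    by_contra hcon
    rw [integral_undef hcon] at hq1; norm_num at hq1
  set c := ∫ y, f y * q y ∂ν with hcdef
  -- nonemptiness of the index set
  obtain ⟨e, he0, heb⟩ := exists_between hb
  have heT : e ≠ ⊤ := (heb.trans_le le_top).ne
  have heB : e ≠ ⊥ := by
    intro h; rw [h] at he0; exact (not_lt.mpr bot_le) he0
  have hecoe : ((e.toReal : ℝ) : EReal) = e := EReal.coe_toReal heT heB
  have hl0pos : 0 < e.toReal := by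
    have : ((0 : ℝ) : EReal) < (e.toReal : EReal) := by rw [hecoe]; exact_mod_cast he0
    exact_mod_cast this
  have hne : ((fun l => (KLd ν p q + ψ l) / l) ''
      {l : ℝ | 0 < l ∧ (l : EReal) < b}).Nonempty :=
    ⟨_, ⟨e.toReal, ⟨hl0pos, by rw [hecoe]; exact heb⟩, rfl⟩⟩
  apply le_csInf hne
  rintro r ⟨l, ⟨hl, hlb⟩, rfl⟩
  rw [le_div_iff₀ hl]
  -- Donsker–Varadhan bound for this l
  set g : X → ℝ := fun x => l * (f x - c) with hgdef
  set Z := ∫ x, Real.exp (g x) * q x ∂ν with hZdef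
  have hZint : Integrable (fun x => Real.exp (g x) * q x) ν := hexp l hl.le hlb
  have hZnn : 0 ≤ Z := integral_nonneg fun x => mul_nonneg (Real.exp_pos _).le (hq0 x)
  have hZpos : 0 < Z := by
    rcases hZnn.eq_or_lt with h | h
    · exfalso
      have h0 := (integral_eq_zero_iff_of_nonneg
        (fun x => mul_nonneg (Real.exp_pos _).le (hq0 x)) hZint).mp h.symm
      have hq0' : q =ᵐ[ν] 0 := by
        filter_upwards [h0] with x hx
        have hx' : Real.exp (g x) * q x = 0 := hx
        rcases mul_eq_zero.mp hx' with h' | h'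
        · exact absurd h' (Real.exp_ne_zero _)
        · exact h'
      rw [integral_congr_ae hq0'] at hq1
      simp at hq1
    · exact h
  -- pointwise inequality
  have hpt : ∀ x, p x * g x - p x * Real.log Z
      ≤ p x * Real.log (p x / q x) + (Real.exp (g x) * q x / Z - p x) := by
    intro x
    rcases (hq0 x).eq_or_lt with hq | hq
    · have hp := hac x hq.symm
      simp [← hq, hp]
    · have key := fenchel_xy (p x / q x) (g x - Real.log Z) (div_nonneg (hp0 x) (hq0 x))
      have key2 := mul_le_mul_of_nonneg_left key hq.le
      rw [Real.exp_sub, Real.exp_log hZpos] at key2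
      have h1 : q x * (p x / q x * (g x - Real.log Z)) = p x * g x - p x * Real.log Z := by
        field_simp
      have h2 : q x * (p x / q x * Real.log (p x / q x) - p x / q x + Real.exp (g x) / Z)
          = p x * Real.log (p x / q x) - p x + Real.exp (g x) * q x / Z := by
        field_simp
      rw [h1, h2] at key2
      linarith
  -- integrability of both sides
  have hpgeq : (fun x => p x * g x) = fun x => l * (f x * p x) - (l * c) * p x := by
    funext x; simp only [hgdef]; ring
  have hpg : Integrable (fun x => p x * g x) ν := by
    rw [hpgeq]; exact (hfp.const_mul l).sub (hpint.const_mul (l * c))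
  have hLHS : Integrable (fun x => p x * g x - p x * Real.log Z) ν := by
    have : (fun x => p x * Real.log Z) = fun x => Real.log Z * p x := by
      funext x; ring
    exact hpg.sub (by rw [this]; exact hpint.const_mul _)
  have hRHS : Integrable
      (fun x => p x * Real.log (p x / q x) + (Real.exp (g x) * q x / Z - p x)) ν :=
    hKL.add ((hZint.div_const Z).sub hpint)
  have hint := integral_mono hLHS hRHS hpt
  -- compute LHS integral
  have hIpg : ∫ x, p x * g x ∂ν = l * (∫ x, f x * p x ∂ν) - l * c := by
    rw [hpgeq, integral_sub (hfp.const_mul l) (hpint.const_mul (l * c)),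
      integral_const_mul, integral_const_mul, hp1, mul_one]
  have hIL : ∫ x, (p x * g x - p x * Real.log Z) ∂ν
      = l * (∫ x, f x * p x ∂ν) - l * c - Real.log Z := by
    have hplogZ : (fun x => p x * Real.log Z) = fun x => Real.log Z * p x := by
      funext x; ring
    rw [integral_sub hpg (by rw [hplogZ]; exact hpint.const_mul _), hIpg, hplogZ,
      integral_const_mul, hp1, mul_one]
  have hdiv : Integrable (fun x => Real.exp (g x) * q x / Z) ν := hZint.div_const Z
  have hIR : ∫ x, (p x * Real.log (p x / q x) + (Real.exp (g x) * q x / Z - p x)) ∂ν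
      = KLd ν p q := by
    have h1 : ∫ x, (p x * Real.log (p x / q x) + (Real.exp (g x) * q x / Z - p x)) ∂ν
        = (∫ x, p x * Real.log (p x / q x) ∂ν)
          + ∫ x, (Real.exp (g x) * q x / Z - p x) ∂ν := integral_add hKL (hdiv.sub hpint)
    have h2 : ∫ x, (Real.exp (g x) * q x / Z - p x) ∂ν
        = (∫ x, Real.exp (g x) * q x ∂ν) / Z - 1 := by
      rw [integral_sub hdiv hpint, integral_div, hp1]
    rw [h1, h2, ← hZdef, div_self hZpos.ne']
    simp [KLd]
  rw [hIL, hIR] at hint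
  have hψl : Real.log Z ≤ ψ l := hcgf l hl.le hlb
  -- conclude
  have hring : (∫ x, f x * p x ∂ν - c) * l = l * (∫ x, f x * p x ∂ν) - l * c := by ring
  rw [hring]
  linarith
end
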